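/- The first Kac–Weisfeiler conjecture fails for L: M(L) ≠ p^{(dim L − ind L)/2}. Explicitly, since dim L = k+2 and ind L = k, one has M(L) ≠ p; in fact there exists a finite-dimensional simple L-module whose dimension is strictly greater than p. -/

import Mathlib

universe u v w

open Module

/-- The coadjoint stabilizer `g_χ = {X ∈ g : χ([X,Y]) = 0 for all Y ∈ g}` of a linear
functional `χ` on a Lie algebra `g`, as a linear subspace of `g`. -/
def coadjointStabilizer (𝕜 : Type u) [Field 𝕜] (g : Type v) [LieRing g] [LieAlgebra 𝕜 g]
    (χ : Module.Dual 𝕜 g) : Submodule 𝕜 g where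
  carrier := {X | ∀ Y : g, χ ⁅X, Y⁆ = 0}
  add_mem' := by intro a b ha hb; intro Y; rw [add_lie, map_add, ha Y, hb Y, add_zero]
  zero_mem' := by intro Y; rw [zero_lie, map_zero]
  smul_mem' := by intro c a ha; intro Y; rw [smul_lie, map_smul, ha Y, smul_zero]

/-- The index of a Lie algebra: the minimum over `χ ∈ g*` of the dimension of the
coadjoint stabilizer `g_χ`. -/
noncomputable def lieIndex (𝕜 : Type u) [Field 𝕜] (g : Type v) [LieRing g]
    [LieAlgebra 𝕜 g] : ℕ :=
  ⨅ χ : Module.Dual 𝕜 g, Module.finrank 𝕜 (coadjointStabilizer 𝕜 g χ)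

/-- `M(g)`: the supremum of the dimensions `dim_𝕜 V` over all finite-dimensional simple
`g`-modules `V`. -/
noncomputable def maxSimpleDim (𝕜 : Type u) [Field 𝕜] (g : Type v) [LieRing g]
    [LieAlgebra 𝕜 g] : ℕ :=
  sSup {n : ℕ | ∃ (V : Type (max u v)) (_ : AddCommGroup V) (_ : Module 𝕜 V)
      (_ : LieRingModule g V) (_ : LieModule 𝕜 g V),
      FiniteDimensional 𝕜 V ∧ LieModule.IsIrreducible 𝕜 g V ∧ Module.finrank 𝕜 V = n}

/-- `b` is a basis of the Lie algebra `L` of the paper: `Sum.inl i ↦ x_{i+1}`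
(for `i : Fin k`), `Sum.inr 0 ↦ D_0`, `Sum.inr 1 ↦ D`, where `D_0` is central, the `x_i`
commute, `[D, x_i] = x_i` for `i = 1, …, k-2`, `[D, x_{k-1}] = x_k` and `[D, x_k] = 0`. -/
def IsLBasis {𝕜 : Type u} [Field 𝕜] {L : Type v} [LieRing L] [LieAlgebra 𝕜 L]
    {k : ℕ} (b : Basis (Fin k ⊕ Fin 2) 𝕜 L) : Prop :=
  (∀ i j : Fin k, ⁅b (Sum.inl i), b (Sum.inl j)⁆ = 0) ∧
  (∀ v : Fin k ⊕ Fin 2, ⁅b (Sum.inr 0), b v⁆ = 0) ∧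
  (∀ i : Fin k, (i : ℕ) < k - 2 → ⁅b (Sum.inr 1), b (Sum.inl i)⁆ = b (Sum.inl i)) ∧
  (∀ i j : Fin k, (i : ℕ) = k - 2 → (j : ℕ) = k - 1 →
      ⁅b (Sum.inr 1), b (Sum.inl i)⁆ = b (Sum.inl j)) ∧
  (∀ i : Fin k, (i : ℕ) = k - 1 → ⁅b (Sum.inr 1), b (Sum.inl i)⁆ = 0)

/-!
The simple module is `V = 𝕜^(𝔽_p × 𝔽_p)`, of dimension `p² > p`. Let `T` and `E` be the
translations by `(1, 0)` and `(0, 1)`, `A` and `N` multiplication by the first and second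
coordinate, and `B = E⁻¹ N`. Then `x_1, …, x_{k-2}` act by `T`, `x_{k-1}` by `E`, `x_k` by `1`,
`D_0` by `0` and `D` by `A + B`: indeed `[A, T] = T`, `[B, E] = 1`, and `A`, `B` commute with
`E`, `T` respectively. As `A` and `B` commute, `(A + B)^p = A^p + B^p = A`: the coordinates lie
in `𝔽_p`, and `B^p` is a translate of multiplication by `∏_{c ∈ 𝔽_p} c = 0`. So a nonzero
submodule is stable under `A` and under `N = E B`; the two coordinates separate the points of
`𝔽_p²`, so the submodule contains a delta function, and its translates span `V`.

For the index, `X ↦ χ([X, ·])` has rank at most `2` since the `x_i` commute and `D_0` is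
central, and rank `2` at `χ = x_k^*`; so `ind L = (k + 2) - 2 = k`.
-/

attribute [local instance] LieRing.ofAssociativeRing

def Submodule.invtSubalgebra {R M : Type*} [CommSemiring R] [AddCommMonoid M] [Module R M]
    (N : Submodule R M) : Subalgebra R (Module.End R M) where
  carrier := {φ | ∀ m ∈ N, φ m ∈ N}
  mul_mem' hφ hψ m hm := hφ _ (hψ m hm)
  add_mem' hφ hψ m hm := N.add_mem (hφ m hm) (hψ m hm)
  algebraMap_mem' c _ hm := N.smul_mem c hm

section Translate

open scoped translate

variable (R : Type*) [CommRing R] {G : Type*} [AddCommGroup G]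

def translateₗ (g : G) : Module.End R (G → R) where
  toFun := τ g
  map_add' := translate_add_right g
  map_smul' c f := translate_smul_right g f c

variable {R}

@[simp] lemma translateₗ_apply (g : G) (f : G → R) (x : G) :
    translateₗ R g f x = f (x - g) := rfl

lemma translateₗ_add (g h : G) :
    translateₗ R (g + h) = translateₗ R g * translateₗ R h :=
  LinearMap.ext (translate_add g h)

@[simp] lemma translateₗ_zero : translateₗ R (0 : G) = 1 :=
  LinearMap.ext translate_zero

lemma translateₗ_nsmul (n : ℕ) (g : G) : translateₗ R (n • g) = translateₗ R g ^ n := by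
  induction n with
  | zero => simp
  | succ n ih => rw [succ_nsmul, translateₗ_add, ih, pow_succ]

lemma commute_translateₗ (g h : G) : Commute (translateₗ R g) (translateₗ R h) := by
  rw [Commute, SemiconjBy, ← translateₗ_add, ← translateₗ_add, add_comm]

lemma translateₗ_single [DecidableEq G] (g x : G) (c : R) :
    translateₗ R g (Pi.single x c) = Pi.single (x + g) c := by
  ext y
  simp [Pi.single_apply, sub_eq_iff_eq_add]

lemma lie_mulLeft_translateₗ (α : G →+ R) (g : G) :
    ⁅LinearMap.mulLeft R ⇑α, translateₗ R g⁆ = α g • translateₗ R g := by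
  ext f x
  simp [Ring.lie_def, map_sub]
  ring

lemma lie_translateₗ_mul_mulLeft_translateₗ (α : G →+ R) (g h : G) :
    ⁅translateₗ R h * LinearMap.mulLeft R ⇑α, translateₗ R g⁆ = α g • translateₗ R (h + g) := by
  ext f x
  simp [Ring.lie_def, sub_sub, add_comm g h]
  ring

lemma Submodule.eq_top_of_single_mem_of_translateₗ_mem [Finite G] [DecidableEq G]
    {N : Submodule R (G → R)} (hN : ∀ g, translateₗ R g ∈ N.invtSubalgebra) {x : G}
    (hx : Pi.single x 1 ∈ N) : N = ⊤ := by
  rw [eq_top_iff, ← (Pi.basisFun R G).span_eq, Submodule.span_le]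
  rintro _ ⟨y, rfl⟩
  simpa [translateₗ_single] using hN (y - x) _ hx

end Translate

lemma Submodule.exists_single_mem_of_separating {𝕜 ι : Type*} [Field 𝕜] [Fintype ι]
    [DecidableEq ι] {N : Submodule 𝕜 (ι → 𝕜)} (hN : N ≠ ⊥) (S : Set (ι → 𝕜))
    (hS : ∀ α ∈ S, LinearMap.mulLeft 𝕜 α ∈ N.invtSubalgebra)
    (hsep : ∀ i j, i ≠ j → ∃ α ∈ S, α i ≠ α j) : ∃ i, Pi.single i (1 : 𝕜) ∈ N := by
  obtain ⟨f, hfN, hf0⟩ := N.ne_bot_iff.mp hN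
  obtain ⟨i, hfi⟩ := Function.ne_iff.mp hf0
  choose! α hαS hαsep using hsep i
  set h : ι → 𝕜 := ∏ j ∈ Finset.univ.erase i, (α j - algebraMap 𝕜 _ (α j j))
  have hmem : h ∈ N.invtSubalgebra.comap (Algebra.lmul 𝕜 (ι → 𝕜)) :=
    Subalgebra.prod_mem _ fun j hj ↦ Subalgebra.sub_mem _
      (hS _ (hαS j (Finset.ne_of_mem_erase hj).symm)) (Subalgebra.algebraMap_mem _ _)
  have hhi : h i ≠ 0 := by
    simp only [h, Finset.prod_apply]
    exact Finset.prod_ne_zero_iff.mpr fun j hj ↦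
      sub_ne_zero.mpr (hαsep j (Finset.ne_of_mem_erase hj).symm)
  have hhf : h * f = (h i * f i) • Pi.single i 1 := by
    ext j
    rcases eq_or_ne j i with rfl | hji
    · simp
    · have : h j = 0 := by
        simp only [h, Finset.prod_apply]
        exact Finset.prod_eq_zero (Finset.mem_erase.mpr ⟨hji, Finset.mem_univ j⟩) (by simp)
      simp [this, hji]
  have hhfN : h * f ∈ N := hmem f hfN
  refine ⟨i, ?_⟩
  rw [← inv_smul_smul₀ (mul_ne_zero hhi hfi) (Pi.single i 1), ← hhf]
  exact N.smul_mem _ hhfN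

noncomputable def Module.Basis.constrLieHom {ι R L A : Type*} [CommRing R] [LieRing L]
    [LieAlgebra R L] [LieRing A] [LieAlgebra R A] (b : Basis ι R L) (f : ι → A)
    (h : ∀ i j, b.constr R f ⁅b i, b j⁆ = ⁅f i, f j⁆) : L →ₗ⁅R⁆ A where
  __ := b.constr R f
  map_lie' {x y} := by
    let B₁ : L →ₗ[R] L →ₗ[R] A :=
      (LieModule.toEnd R L L : L →ₗ[R] L →ₗ[R] L).compr₂ (b.constr R f)
    let B₂ : L →ₗ[R] L →ₗ[R] A :=
      ((LieModule.toEnd R A A : A →ₗ[R] A →ₗ[R] A) ∘ₗ b.constr R f).compl₂ (b.constr R f)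
    have : B₁ = B₂ := LinearMap.ext_basis b b fun i j ↦ by simpa [B₁, B₂] using h i j
    exact LinearMap.congr_fun₂ this x y

lemma Module.Basis.constrLieHom_basis {ι R L A : Type*} [CommRing R] [LieRing L]
    [LieAlgebra R L] [LieRing A] [LieAlgebra R A] (b : Basis ι R L) (f : ι → A)
    (h : ∀ i j, b.constr R f ⁅b i, b j⁆ = ⁅f i, f j⁆) (i : ι) : b.constrLieHom f h (b i) = f i :=
  b.constr_basis R f i

lemma LieModule.isIrreducible_compLieHom {R L M : Type*} [CommRing R] [LieRing L]
    [LieAlgebra R L] [AddCommGroup M] [Module R M] [Nontrivial M] (ρ : L →ₗ⁅R⁆ Module.End R M)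
    (h : ∀ N : Submodule R M, N ≠ ⊥ → (∀ x, ρ x ∈ N.invtSubalgebra) → N = ⊤) :
    letI := LieRingModule.compLieHom M ρ
    LieModule.IsIrreducible R L M := by
  let := LieRingModule.compLieHom M ρ
  refine LieModule.IsIrreducible.mk fun N hN ↦ ?_
  rw [← LieSubmodule.toSubmodule_eq_top]
  exact h N.toSubmodule ((LieSubmodule.toSubmodule_eq_bot N).not.mpr hN)
    fun x m hm ↦ N.lie_mem (x := x) hm

lemma Nat.sSup_ne_of_lt_of_mem {s : Set ℕ} {m n : ℕ} (hm : m ≠ 0) (hmn : m < n) (hn : n ∈ s) :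
    sSup s ≠ m := by
  by_cases hs : BddAbove s
  · exact (hmn.trans_le (le_csSup hs hn)).ne'
  · rw [csSup_of_not_bddAbove hs, csSup_empty]
    exact hm.symm

section Index

variable {𝕜 : Type u} [Field 𝕜] {L : Type v} [LieRing L] [LieAlgebra 𝕜 L]

def coadjointMap (χ : Dual 𝕜 L) : L →ₗ[𝕜] Dual 𝕜 L :=
  (LieModule.toEnd 𝕜 L L : L →ₗ[𝕜] Module.End 𝕜 L).compr₂ χ

@[simp] lemma coadjointMap_apply (χ : Dual 𝕜 L) (X Y : L) : coadjointMap χ X Y = χ ⁅X, Y⁆ := rfl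

lemma coadjointStabilizer_eq_ker (χ : Dual 𝕜 L) :
    coadjointStabilizer 𝕜 L χ = LinearMap.ker (coadjointMap χ) := by
  ext X
  simp [coadjointStabilizer, LinearMap.ext_iff]

lemma lieIndex_eq_finrank_sub [FiniteDimensional 𝕜 L] (χ₀ : Dual 𝕜 L)
    (h : ∀ χ : Dual 𝕜 L, finrank 𝕜 (LinearMap.range (coadjointMap χ)) ≤
      finrank 𝕜 (LinearMap.range (coadjointMap χ₀))) :
    lieIndex 𝕜 L = finrank 𝕜 L - finrank 𝕜 (LinearMap.range (coadjointMap χ₀)) := by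
  have hstab χ : finrank 𝕜 (coadjointStabilizer 𝕜 L χ) =
      finrank 𝕜 L - finrank 𝕜 (LinearMap.range (coadjointMap χ)) := by
    rw [coadjointStabilizer_eq_ker, ← (coadjointMap χ).finrank_range_add_finrank_ker]
    omega
  refine le_antisymm ((ciInf_le (OrderBot.bddBelow _) χ₀).trans (hstab χ₀).le) ?_
  exact le_ciInf fun χ ↦ (hstab χ).symm ▸ Nat.sub_le_sub_left (h χ) _

variable {k : ℕ} {b : Basis (Fin k ⊕ Fin 2) 𝕜 L}

lemma IsLBasis.lie_inr_zero (hb : IsLBasis b) (Y : L) : ⁅b (.inr 0), Y⁆ = 0 := by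
  have : (LieModule.toEnd 𝕜 L L (b (.inr 0)) : Module.End 𝕜 L) = 0 := b.ext hb.2.1
  exact LinearMap.congr_fun this Y

lemma IsLBasis.lie_inr_zero_right (hb : IsLBasis b) (Y : L) : ⁅Y, b (.inr 0)⁆ = 0 := by
  rw [← lie_skew, hb.lie_inr_zero, neg_zero]

lemma IsLBasis.coadjointMap_inl (hb : IsLBasis b) (χ : Dual 𝕜 L) (i : Fin k) :
    coadjointMap χ (b (.inl i)) = χ ⁅b (.inl i), b (.inr 1)⁆ • b.coord (.inr 1) := by
  refine b.ext fun w ↦ ?_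
  rcases w with j | j
  · simp [hb.1 i j]
  · revert j
    exact Fin.forall_fin_two.mpr ⟨by simp [hb.lie_inr_zero_right], by simp⟩

lemma IsLBasis.finrank_range_coadjointMap_le [FiniteDimensional 𝕜 L] (hb : IsLBasis b)
    (χ : Dual 𝕜 L) : finrank 𝕜 (LinearMap.range (coadjointMap χ)) ≤ 2 := by
  have hle : LinearMap.range (coadjointMap χ) ≤
      Submodule.span 𝕜 (Set.range ![coadjointMap χ (b (.inr 1)), b.coord (.inr 1)]) := by
    rw [LinearMap.range_eq_map, ← b.span_eq, Submodule.map_span, Submodule.span_le]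
    rintro _ ⟨_, ⟨w, rfl⟩, rfl⟩
    rcases w with i | j
    · rw [hb.coadjointMap_inl]
      exact Submodule.smul_mem _ _ (Submodule.subset_span ⟨1, rfl⟩)
    · revert j
      refine Fin.forall_fin_two.mpr ⟨?_, Submodule.subset_span ⟨0, rfl⟩⟩
      have : coadjointMap χ (b (.inr 0)) = 0 := by ext; simp [hb.lie_inr_zero]
      exact this ▸ Submodule.zero_mem _
  simpa using (Submodule.finrank_mono hle).trans (finrank_range_le_card (R := 𝕜) _)

lemma IsLBasis.two_le_finrank_range_coadjointMap [FiniteDimensional 𝕜 L] (hk : 2 ≤ k)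
    (hb : IsLBasis b) :
    2 ≤ finrank 𝕜 (LinearMap.range (coadjointMap (b.coord (.inl ⟨k - 1, by omega⟩)))) := by
  set φ := coadjointMap (b.coord (.inl ⟨k - 1, by omega⟩))
  have hD : ⁅b (.inr 1), b (.inl ⟨k - 2, by omega⟩)⁆ = b (.inl ⟨k - 1, by omega⟩) :=
    hb.2.2.2.1 _ _ rfl rfl
  have hD' : ⁅b (.inl ⟨k - 2, by omega⟩), b (.inr 1)⁆ = -b (.inl ⟨k - 1, by omega⟩) := by
    rw [← lie_skew, hD]
  -- evaluated at `x_{k-1}` and at `D`, the pair `φ D, φ x_{k-1}` gives the matrix `diag(1, -1)`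
  have hli : LinearIndependent 𝕜 ![φ (b (.inr 1)), φ (b (.inl ⟨k - 2, by omega⟩))] := by
    refine LinearIndependent.pair_iff.mpr fun s t hst ↦ ⟨?_, ?_⟩
    · simpa [φ, hD] using LinearMap.congr_fun hst (b (.inl ⟨k - 2, by omega⟩))
    · simpa [φ, hD'] using LinearMap.congr_fun hst (b (.inr 1))
  have hle : Submodule.span 𝕜 (Set.range ![φ (b (.inr 1)), φ (b (.inl ⟨k - 2, by omega⟩))]) ≤
      LinearMap.range φ := by
    rw [Submodule.span_le]
    rintro _ ⟨j, rfl⟩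
    fin_cases j <;> exact LinearMap.mem_range_self _ _
  have := Submodule.finrank_mono hle
  rwa [← Set.finrank, ← linearIndependent_iff_card_eq_finrank_span.mp hli, Fintype.card_fin]
    at this

lemma IsLBasis.lieIndex_eq [FiniteDimensional 𝕜 L] (hk : 2 ≤ k) (hb : IsLBasis b) :
    lieIndex 𝕜 L = finrank 𝕜 L - 2 := by
  have hrank := le_antisymm (hb.finrank_range_coadjointMap_le _)
    (hb.two_le_finrank_range_coadjointMap hk)
  rw [lieIndex_eq_finrank_sub _ fun χ ↦ hrank ▸ hb.finrank_range_coadjointMap_le χ, hrank]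

end Index

namespace KacWeisfeiler

variable (𝕜 : Type u) [Field 𝕜] (p : ℕ) [Fact p.Prime]

abbrev Plane : Type v := ULift.{v} (ZMod p × ZMod p)

lemma finrank_plane_fun : finrank 𝕜 (Plane.{v} p → 𝕜) = p ^ 2 := by
  simp [sq]

def unitFst : Plane.{v} p := ⟨(1, 0)⟩

def unitSnd : Plane.{v} p := ⟨(0, 1)⟩

lemma translateₗ_mem_invtSubalgebra {N : Submodule 𝕜 (Plane.{v} p → 𝕜)}
    (h₁ : translateₗ 𝕜 (unitFst p) ∈ N.invtSubalgebra)
    (h₂ : translateₗ 𝕜 (unitSnd p) ∈ N.invtSubalgebra) (g : Plane.{v} p) :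
    translateₗ 𝕜 g ∈ N.invtSubalgebra := by
  have hg : g = g.down.1.val • unitFst p + g.down.2.val • unitSnd p := by
    ext <;> simp [unitFst, unitSnd, -nsmul_eq_mul]
  rw [hg, translateₗ_add, translateₗ_nsmul, translateₗ_nsmul]
  exact Subalgebra.mul_mem _ (Subalgebra.pow_mem _ h₁ _) (Subalgebra.pow_mem _ h₂ _)

variable [CharP 𝕜 p]

def charFst : Plane.{v} p →+ 𝕜 :=
  (ZMod.castHom dvd_rfl 𝕜 : ZMod p →+ 𝕜).comp
    ((AddMonoidHom.fst _ _).comp (AddEquiv.ulift : Plane.{v} p ≃+ _).toAddMonoidHom)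

def charSnd : Plane.{v} p →+ 𝕜 :=
  (ZMod.castHom dvd_rfl 𝕜 : ZMod p →+ 𝕜).comp
    ((AddMonoidHom.snd _ _).comp (AddEquiv.ulift : Plane.{v} p ≃+ _).toAddMonoidHom)

@[simp] lemma charFst_apply (x : Plane.{v} p) :
    charFst 𝕜 p x = ZMod.castHom dvd_rfl 𝕜 x.down.1 := rfl

@[simp] lemma charSnd_apply (x : Plane.{v} p) :
    charSnd 𝕜 p x = ZMod.castHom dvd_rfl 𝕜 x.down.2 := rfl

@[simp] lemma charSnd_unitSnd : charSnd 𝕜 p (unitSnd.{v} p) = 1 := by simp [unitSnd]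

noncomputable def lowering : Module.End 𝕜 (Plane.{v} p → 𝕜) :=
  translateₗ 𝕜 (-unitSnd p) * LinearMap.mulLeft 𝕜 ⇑(charSnd 𝕜 p)

noncomputable def actionD : Module.End 𝕜 (Plane.{v} p → 𝕜) :=
  LinearMap.mulLeft 𝕜 ⇑(charFst 𝕜 p) + lowering 𝕜 p

lemma lie_actionD_translateₗ_unitFst :
    ⁅actionD.{u, v} 𝕜 p, translateₗ 𝕜 (unitFst p)⁆ = translateₗ 𝕜 (unitFst p) := by
  rw [actionD, lowering, add_lie, lie_mulLeft_translateₗ, lie_translateₗ_mul_mulLeft_translateₗ]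
  simp [unitFst]

lemma lie_actionD_translateₗ_unitSnd : ⁅actionD.{u, v} 𝕜 p, translateₗ 𝕜 (unitSnd p)⁆ = 1 := by
  rw [actionD, lowering, add_lie, lie_mulLeft_translateₗ, lie_translateₗ_mul_mulLeft_translateₗ]
  simp [unitSnd]

lemma lowering_pow_apply (n : ℕ) (f : Plane.{v} p → 𝕜) (x : Plane.{v} p) :
    (lowering 𝕜 p ^ n) f x =
      (∏ j ∈ Finset.range n, charSnd 𝕜 p (x + (j + 1) • unitSnd p)) * f (x + n • unitSnd p) := by
  induction n generalizing f with
  | zero => simp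
  | succ n ih =>
    rw [pow_succ, Module.End.mul_apply, ih, Finset.prod_range_succ]
    simp [lowering, add_smul, add_assoc, mul_assoc]

lemma lowering_pow_card : lowering.{u, v} 𝕜 p ^ p = 0 := by
  refine LinearMap.ext fun f ↦ funext fun x ↦ ?_
  rw [lowering_pow_apply, LinearMap.zero_apply, Pi.zero_apply]
  -- the factor with `j = -x.2 - 1` vanishes
  refine mul_eq_zero_of_left (Finset.prod_eq_zero (i := (-x.down.2 - 1).val)
    (Finset.mem_range.mpr (ZMod.val_lt _)) ?_) _
  have hzero : x.down.2 + (((-x.down.2 - 1).val + 1 : ℕ) : ZMod p) = 0 := by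
    push_cast [ZMod.natCast_zmod_val]
    ring
  rw [map_add, map_nsmul, charSnd_unitSnd, nsmul_one, charSnd_apply,
    ← map_natCast (ZMod.castHom dvd_rfl 𝕜), ← map_add, hzero, map_zero]

lemma mulLeft_charFst_pow_card :
    LinearMap.mulLeft 𝕜 ⇑(charFst.{u, v} 𝕜 p) ^ p = LinearMap.mulLeft 𝕜 ⇑(charFst 𝕜 p) := by
  rw [LinearMap.pow_mulLeft]
  congr 1
  ext x
  simp only [Pi.pow_apply, charFst_apply, ← map_pow, ZMod.pow_card]

lemma actionD_pow_card : actionD.{u, v} 𝕜 p ^ p = LinearMap.mulLeft 𝕜 ⇑(charFst 𝕜 p) := by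
  have : CharP (Module.End 𝕜 (Plane.{v} p → 𝕜)) p :=
    charP_of_injective_algebraMap (algebraMap 𝕜 _).injective p
  have hcomm : Commute (LinearMap.mulLeft 𝕜 ⇑(charFst 𝕜 p)) (lowering 𝕜 p) := by
    ext f x
    simp [lowering, unitSnd]
    ring
  rw [actionD, add_pow_char_of_commute p hcomm, mulLeft_charFst_pow_card, lowering_pow_card,
    add_zero]

lemma eq_top_of_mem_invtSubalgebra {N : Submodule 𝕜 (Plane.{v} p → 𝕜)} (hN : N ≠ ⊥)
    (h₁ : translateₗ 𝕜 (unitFst p) ∈ N.invtSubalgebra)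
    (h₂ : translateₗ 𝕜 (unitSnd p) ∈ N.invtSubalgebra)
    (hD : actionD 𝕜 p ∈ N.invtSubalgebra) : N = ⊤ := by
  classical
  have hFst : LinearMap.mulLeft 𝕜 ⇑(charFst 𝕜 p) ∈ N.invtSubalgebra :=
    actionD_pow_card 𝕜 p ▸ Subalgebra.pow_mem _ hD p
  have hSnd : LinearMap.mulLeft 𝕜 ⇑(charSnd 𝕜 p) ∈ N.invtSubalgebra := by
    have h := Subalgebra.mul_mem _ h₂ (Subalgebra.sub_mem _ hD hFst)
    rwa [actionD, add_sub_cancel_left, lowering, ← mul_assoc, ← translateₗ_add, add_neg_cancel,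
      translateₗ_zero, one_mul] at h
  have hinj : Function.Injective (ZMod.castHom (dvd_refl p) 𝕜) := (ZMod.castHom _ 𝕜).injective
  obtain ⟨x, hx⟩ := N.exists_single_mem_of_separating hN {⇑(charFst 𝕜 p), ⇑(charSnd 𝕜 p)}
    (by simpa using ⟨hFst, hSnd⟩) fun x y hxy ↦ by
      by_contra! h
      simp only [Set.mem_insert_iff, Set.mem_singleton_iff, forall_eq_or_imp, forall_eq] at h
      exact hxy (ULift.ext _ _ (Prod.ext (hinj h.1) (hinj h.2)))
  exact N.eq_top_of_single_mem_of_translateₗ_mem (translateₗ_mem_invtSubalgebra 𝕜 p h₁ h₂) hx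

variable {p} {k : ℕ}

def xShift (i : Fin k) : Plane.{v} p :=
  if (i : ℕ) < k - 2 then unitFst p else if (i : ℕ) = k - 2 then unitSnd p else 0

noncomputable def basisAction : Fin k ⊕ Fin 2 → Module.End 𝕜 (Plane.{v} p → 𝕜) :=
  Sum.elim (fun i ↦ translateₗ 𝕜 (xShift i)) ![0, actionD 𝕜 p]

variable {L : Type v} [LieRing L] [LieAlgebra 𝕜 L] {b : Basis (Fin k ⊕ Fin 2) 𝕜 L}

lemma constr_basisAction_lie_inr_one_inl (hk : 2 ≤ k) (hb : IsLBasis b) (i : Fin k) :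
    b.constr 𝕜 (basisAction 𝕜) ⁅b (.inr 1), b (.inl i)⁆ =
      ⁅actionD 𝕜 p, translateₗ 𝕜 (xShift i)⁆ := by
  obtain ⟨-, -, hDlt, hDmid, hDtop⟩ := hb
  rcases Nat.lt_trichotomy i (k - 2) with hlt | heq | hgt
  · rw [hDlt i hlt, b.constr_basis]
    simp [basisAction, xShift, hlt, lie_actionD_translateₗ_unitFst]
  · rw [hDmid i ⟨k - 1, by omega⟩ heq rfl, b.constr_basis]
    simp [basisAction, xShift, heq, lie_actionD_translateₗ_unitSnd,
      show ¬k - 1 < k - 2 by omega, show k - 1 ≠ k - 2 by omega]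
  · rw [hDtop i (by omega), map_zero]
    simp [xShift, not_lt.mpr hgt.le, hgt.ne', Ring.lie_def]

lemma constr_basisAction_lie (hk : 2 ≤ k) (hb : IsLBasis b) (v w : Fin k ⊕ Fin 2) :
    b.constr 𝕜 (basisAction 𝕜) ⁅b v, b w⁆ =
      ⁅basisAction 𝕜 v, basisAction.{u, v} 𝕜 (p := p) w⁆ := by
  have hD := constr_basisAction_lie_inr_one_inl (p := p) 𝕜 hk hb
  rcases v with i | j <;> rcases w with i' | j'
  · rw [hb.1, map_zero]
    exact (commute_translateₗ _ _).lie_eq.symm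
  · revert j'
    refine Fin.forall_fin_two.mpr ⟨by simp [basisAction, hb.lie_inr_zero_right], ?_⟩
    rw [← lie_skew, map_neg, hD, ← lie_skew, neg_neg]
    rfl
  · revert j
    exact Fin.forall_fin_two.mpr ⟨by simp [basisAction, hb.lie_inr_zero], hD i'⟩
  · revert j j'
    simp [Fin.forall_fin_two, basisAction, hb.lie_inr_zero, hb.lie_inr_zero_right]

noncomputable def representation (hk : 2 ≤ k) (hb : IsLBasis b) :
    L →ₗ⁅𝕜⁆ Module.End 𝕜 (Plane.{v} p → 𝕜) :=
  b.constrLieHom (basisAction 𝕜) (constr_basisAction_lie 𝕜 hk hb)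

lemma representation_basis (hk : 2 ≤ k) (hb : IsLBasis b) (w : Fin k ⊕ Fin 2) :
    representation 𝕜 (p := p) hk hb (b w) = basisAction 𝕜 w :=
  b.constrLieHom_basis _ _ w

lemma isIrreducible_representation (hk : 3 ≤ k) (hb : IsLBasis b) :
    letI := LieRingModule.compLieHom (Plane.{v} p → 𝕜)
      (representation 𝕜 (p := p) (by omega) hb)
    LieModule.IsIrreducible 𝕜 L (Plane.{v} p → 𝕜) := by
  refine LieModule.isIrreducible_compLieHom _ fun N hN hρ ↦ ?_
  have hρb w := representation_basis 𝕜 (p := p) (by omega) hb w ▸ hρ (b w)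
  refine eq_top_of_mem_invtSubalgebra 𝕜 p hN ?_ ?_ (hρb (.inr 1))
  · simpa [basisAction, xShift, show 0 < k - 2 by omega] using hρb (.inl ⟨0, by omega⟩)
  · simpa [basisAction, xShift] using hρb (.inl ⟨k - 2, by omega⟩)

end KacWeisfeiler

open KacWeisfeiler in
theorem stmt1 (p k : ℕ) (hp : p.Prime) (hk : 3 ≤ k)
    (𝕜 : Type u) [Field 𝕜] [CharP 𝕜 p]
    (L : Type v) [LieRing L] [LieAlgebra 𝕜 L]
    (b : Basis (Fin k ⊕ Fin 2) 𝕜 L) (hb : IsLBasis b) :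
    maxSimpleDim 𝕜 L ≠ p ^ ((Module.finrank 𝕜 L - lieIndex 𝕜 L) / 2) ∧
    Module.finrank 𝕜 L = k + 2 ∧ lieIndex 𝕜 L = k ∧
    maxSimpleDim 𝕜 L ≠ p ∧
    ∃ (V : Type (max u v)) (_ : AddCommGroup V) (_ : Module 𝕜 V)
      (_ : LieRingModule L V) (_ : LieModule 𝕜 L V),
      FiniteDimensional 𝕜 V ∧ LieModule.IsIrreducible 𝕜 L V ∧
      p < Module.finrank 𝕜 V := by
  have : Fact p.Prime := ⟨hp⟩
  have : FiniteDimensional 𝕜 L := .of_basis b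
  have hdim : finrank 𝕜 L = k + 2 := by simp [finrank_eq_card_basis b]
  have hind : lieIndex 𝕜 L = k := by rw [hb.lieIndex_eq (by omega), hdim, Nat.add_sub_cancel]
  let ρ := representation 𝕜 (p := p) (by omega) hb
  have hV : ∃ (V : Type (max u v)) (_ : AddCommGroup V) (_ : Module 𝕜 V)
      (_ : LieRingModule L V) (_ : LieModule 𝕜 L V),
      FiniteDimensional 𝕜 V ∧ LieModule.IsIrreducible 𝕜 L V ∧ finrank 𝕜 V = p ^ 2 :=
    ⟨_, _, _, _, LieModule.compLieHom _ ρ, inferInstance, isIrreducible_representation 𝕜 hk hb,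
      finrank_plane_fun 𝕜 p⟩
  have hp2 : p < p ^ 2 := lt_self_pow₀ hp.one_lt one_lt_two
  have hne : maxSimpleDim 𝕜 L ≠ p := Nat.sSup_ne_of_lt_of_mem hp.ne_zero hp2 hV
  refine ⟨?_, hdim, hind, hne, ?_⟩
  · rwa [hdim, hind, show (k + 2 - k) / 2 = 1 by omega, pow_one]
  · obtain ⟨V, i₁, i₂, i₃, i₄, hfin, hirr, hV⟩ := hV
    exact ⟨V, i₁, i₂, i₃, i₄, hfin, hirr, hV ▸ hp2⟩
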